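/- The independence rule is a forgetting operator: for any formulas F_1, F_2 and variable p, ∂_p(F_1,F_2) is logically equivalent to the canonical conservative retraction [{F_1,F_2}, L∖{p}]; equivalently, a valuation v on L∖{p} satisfies ∂_p(F_1,F_2) iff v extends to a model of F_1 ∧ F_2. -/

import Mathlib

/-! Evaluation at `{0,1}`-points does not see the multilinear reduction `Φ`, so `π F` evaluates
to the truth value of `F`. For a polynomial of degree at most one in `x_p`, `b` and `b + c` are
its values at `x_p = 0` and `x_p = 1`, so the independence rule evaluates at `v` to
`(F₁ ∧ F₂)[p := ⊥] ∨ (F₁ ∧ F₂)[p := ⊤]`, which holds exactly when `v` extends, by a choice of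
the value of `p`, to a model of `F₁ ∧ F₂`. -/

inductive Fm (V : Type) : Type
  | bot : Fm V
  | var : V → Fm V
  | not : Fm V → Fm V
  | and : Fm V → Fm V → Fm V
  | or  : Fm V → Fm V → Fm V
  | imp : Fm V → Fm V → Fm V
  | iff : Fm V → Fm V → Fm V

def Fm.eval {V : Type} (v : V → Bool) : Fm V → Bool
  | .bot => false
  | .var p => v p
  | .not F => !(F.eval v)
  | .and F G => F.eval v && G.eval v
  | .or F G => F.eval v || G.eval v
  | .imp F G => !(F.eval v) || G.eval v
  | .iff F G => F.eval v == G.eval v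

noncomputable def Fm.poly {n : ℕ} : Fm (Fin n) → MvPolynomial (Fin n) (ZMod 2)
  | .bot => 0
  | .var i => MvPolynomial.X i
  | .not F => 1 + F.poly
  | .and F G => F.poly * G.poly
  | .or F G => F.poly + G.poly + F.poly * G.poly
  | .imp F G => 1 + F.poly + F.poly * G.poly
  | .iff F G => 1 + F.poly + G.poly

def bval (b : Bool) : ZMod 2 := if b then 1 else 0

/-- The map `Φ` reducing every exponent of a polynomial to at most 1
(the multilinear representative modulo `I_2`). -/
noncomputable def squash {n : ℕ} (a : MvPolynomial (Fin n) (ZMod 2)) :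
    MvPolynomial (Fin n) (ZMod 2) :=
  a.support.sum fun m =>
    MvPolynomial.monomial (Finsupp.mapRange (fun e => min e 1) (by simp) m) (a.coeff m)

/-- The polynomial projection `π = Φ ∘ P`. -/
noncomputable def Fm.proj {n : ℕ} (F : Fm (Fin n)) : MvPolynomial (Fin n) (ZMod 2) :=
  squash F.poly

/-- The substitution `F{p/¬p}`. -/
def substNeg {n : ℕ} (p : Fin n) : Fm (Fin n) → Fm (Fin n)
  | .bot => .bot
  | .var q => if q = p then .not (.var p) else .var q
  | .not F => .not (substNeg p F)
  | .and F G => .and (substNeg p F) (substNeg p G)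
  | .or F G => .or (substNeg p F) (substNeg p G)
  | .imp F G => .imp (substNeg p F) (substNeg p G)
  | .iff F G => .iff (substNeg p F) (substNeg p G)

/-- The Boolean derivative `∂F/∂p`, in its semantic form `¬(F{p/¬p} ↔ F)`. -/
def derivFm {n : ℕ} (p : Fin n) (F : Fm (Fin n)) : Fm (Fin n) :=
  Fm.not (Fm.iff (substNeg p F) F)

/-- The part `b` of the decomposition `a = b + x_p·c` (free of `x_p`): `a` with `x_p := 0`. -/
noncomputable def bPart {n : ℕ} (p : Fin n) (a : MvPolynomial (Fin n) (ZMod 2)) :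
    MvPolynomial (Fin n) (ZMod 2) :=
  MvPolynomial.aeval (fun j : Fin n => if j = p then 0 else MvPolynomial.X j) a

/-- The part `c` of the decomposition `a = b + x_p·c` of a multilinear polynomial:
the formal partial derivative of `a` with respect to `x_p`. -/
noncomputable def cPart {n : ℕ} (p : Fin n) (a : MvPolynomial (Fin n) (ZMod 2)) :
    MvPolynomial (Fin n) (ZMod 2) :=
  MvPolynomial.pderiv p a

/-- The independence rule on polynomials:
`∂_{x_p}(a₁,a₂) = Φ(1 + (1 + b₁b₂)·(1 + (b₁+c₁)(b₂+c₂)))`. -/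
noncomputable def indRule {n : ℕ} (p : Fin n) (a₁ a₂ : MvPolynomial (Fin n) (ZMod 2)) :
    MvPolynomial (Fin n) (ZMod 2) :=
  squash (1 + (1 + bPart p a₁ * bPart p a₂) *
    (1 + (bPart p a₁ + cPart p a₁) * (bPart p a₂ + cPart p a₂)))

open MvPolynomial Function

lemma ZMod.two_pow_eq_pow_min (x : ZMod 2) (e : ℕ) : x ^ e = x ^ min e 1 := by
  have hx : IsIdempotentElem x := by fin_cases x <;> rfl
  rcases Nat.eq_zero_or_pos e with rfl | he
  · rfl
  · rw [min_eq_right he, pow_one, hx.pow_eq he.ne']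

lemma eval_squash {n : ℕ} (x : Fin n → ZMod 2) (a : MvPolynomial (Fin n) (ZMod 2)) :
    eval x (squash a) = eval x a := by
  conv_rhs => rw [a.as_sum]
  simp only [squash, map_sum, eval_monomial]
  refine Finset.sum_congr rfl fun m _ => congrArg _ ?_
  rw [Finsupp.prod_mapRange_index (by simp)]
  exact Finsupp.prod_congr fun i _ => (ZMod.two_pow_eq_pow_min (x i) (m i)).symm

lemma degreeOf_squash_le {n : ℕ} (i : Fin n) (a : MvPolynomial (Fin n) (ZMod 2)) :
    degreeOf i (squash a) ≤ 1 := by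
  refine degreeOf_le_iff.2 fun m hm => ?_
  obtain ⟨m', -, hm'⟩ := Finset.mem_biUnion.1 (support_sum hm)
  rw [Finset.mem_singleton.1 (support_monomial_subset hm')]
  simp

section Multilinear

variable {σ R : Type*} [Fintype σ] [DecidableEq σ] [CommSemiring R]

lemma eval_update_monomial (x : σ → R) (p : σ) (t r : R) (m : σ →₀ ℕ) :
    eval (update x p t) (monomial m r) =
      r * (t ^ m p * ∏ i ∈ Finset.univ.erase p, x i ^ m i) := by
  rw [eval_monomial, Finsupp.prod_fintype _ _ fun _ => pow_zero _,
    ← Finset.mul_prod_erase _ _ (Finset.mem_univ p), update_self]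
  congr 2
  exact Finset.prod_congr rfl fun i hi => by rw [update_of_ne (Finset.ne_of_mem_erase hi)]

/-- A polynomial of degree at most one in `x_p` is `b + x_p c` with `b = a(x_p := 0)` and
`c = ∂a/∂x_p`. -/
lemma eval_update_one_eq_add_eval_pderiv (p : σ) {a : MvPolynomial σ R} (ha : degreeOf p a ≤ 1)
    (x : σ → R) :
    eval (update x p 1) a = eval (update x p 0) a + eval x (pderiv p a) := by
  conv_lhs => rw [a.as_sum]
  conv_rhs => rw [a.as_sum]
  simp only [map_sum, ← Finset.sum_add_distrib]
  refine Finset.sum_congr rfl fun m hm => ?_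
  have hmp : m p ≤ 1 := degreeOf_le_iff.1 ha m hm
  have hsub : ∀ i ∈ Finset.univ.erase p, (m - Finsupp.single p 1 : σ →₀ ℕ) i = m i :=
    fun i hi => by simp [(Finset.ne_of_mem_erase hi).symm]
  rw [pderiv_monomial, ← update_eq_self p x, eval_update_monomial, eval_update_monomial,
    eval_update_monomial]
  simp only [update_eq_self]
  rw [Finset.prod_congr rfl fun i hi => congrArg (x i ^ ·) (hsub i hi)]
  interval_cases hc : m p <;> simp [hc]

end Multilinear

lemma eval_poly {n : ℕ} (v : Fin n → Bool) (F : Fm (Fin n)) :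
    eval (fun i => bval (v i)) F.poly = bval (F.eval v) := by
  induction F with
  | bot => rfl
  | var i => simp [Fm.poly, Fm.eval]
  | not F ih =>
    simp only [Fm.poly, Fm.eval, map_add, map_one, ih]
    cases F.eval v <;> decide
  | and F G ihF ihG =>
    simp only [Fm.poly, Fm.eval, map_mul, ihF, ihG]
    cases F.eval v <;> cases G.eval v <;> decide
  | or F G ihF ihG =>
    simp only [Fm.poly, Fm.eval, map_add, map_mul, ihF, ihG]
    cases F.eval v <;> cases G.eval v <;> decide
  | imp F G ihF ihG =>
    simp only [Fm.poly, Fm.eval, map_add, map_mul, map_one, ihF, ihG]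
    cases F.eval v <;> cases G.eval v <;> decide
  | iff F G ihF ihG =>
    simp only [Fm.poly, Fm.eval, map_add, map_one, ihF, ihG]
    cases F.eval v <;> cases G.eval v <;> decide

lemma eval_proj_update {n : ℕ} (v : Fin n → Bool) (p : Fin n) (b : Bool) (F : Fm (Fin n)) :
    eval (update (fun i => bval (v i)) p (bval b)) F.proj = bval (F.eval (update v p b)) := by
  have hv : update (fun i => bval (v i)) p (bval b) = fun i => bval (update v p b i) :=
    funext fun i => (apply_update (fun _ => bval) v p b i).symm
  rw [hv, Fm.proj, eval_squash, eval_poly]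

lemma eval_bPart {n : ℕ} (p : Fin n) (x : Fin n → ZMod 2) (a : MvPolynomial (Fin n) (ZMod 2)) :
    eval x (bPart p a) = eval (update x p 0) a := by
  rw [bPart, aeval_eq_bind₁]
  refine (eval₂Hom_bind₁ (RingHom.id _) x _ a).trans
    (congrArg (fun y => eval y a) (funext fun i => ?_))
  rcases eq_or_ne i p with rfl | hi <;> simp [*]

lemma eval_bPart_proj {n : ℕ} (v : Fin n → Bool) (p : Fin n) (F : Fm (Fin n)) :
    eval (fun i => bval (v i)) (bPart p F.proj) = bval (F.eval (update v p false)) :=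
  (eval_bPart p _ _).trans (eval_proj_update v p false F)

lemma eval_bPart_add_cPart_proj {n : ℕ} (v : Fin n → Bool) (p : Fin n) (F : Fm (Fin n)) :
    eval (fun i => bval (v i)) (bPart p F.proj) + eval (fun i => bval (v i)) (cPart p F.proj) =
      bval (F.eval (update v p true)) := by
  rw [eval_bPart_proj, ← eval_proj_update, ← eval_proj_update, cPart]
  exact (eval_update_one_eq_add_eval_pderiv p (degreeOf_squash_le p _) _).symm

lemma bval_and_or_and (a b c d : Bool) :
    bval (a && b || c && d) = 1 + (1 + bval a * bval b) * (1 + bval c * bval d) := by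
  cases a <;> cases b <;> cases c <;> cases d <;> decide

lemma bval_injective : Injective bval := by decide

lemma eval_indRule_proj {n : ℕ} (v : Fin n → Bool) (p : Fin n) (F₁ F₂ : Fm (Fin n)) :
    eval (fun i => bval (v i)) (indRule p F₁.proj F₂.proj) =
      bval (F₁.eval (update v p false) && F₂.eval (update v p false) ||
        F₁.eval (update v p true) && F₂.eval (update v p true)) := by
  simp only [indRule, eval_squash, map_add, map_mul, map_one]
  rw [eval_bPart_add_cPart_proj, eval_bPart_add_cPart_proj, eval_bPart_proj, eval_bPart_proj,
    ← bval_and_or_and]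

lemma exists_eq_off_and_iff {α β : Type*} [DecidableEq α] (f : α → β) (a : α)
    (P : (α → β) → Prop) : (∃ g, (∀ x, x ≠ a → g x = f x) ∧ P g) ↔ ∃ b, P (update f a b) := by
  constructor
  · rintro ⟨g, hg, hP⟩
    exact ⟨g a, eq_update_iff.2 ⟨rfl, hg⟩ ▸ hP⟩
  · rintro ⟨b, hP⟩
    exact ⟨_, fun x hx => update_of_ne hx _ _, hP⟩

/-- `D` stands for `∂_p(F₁,F₂) = Θ(∂_{x_p}(π F₁, π F₂))`: any formula whose semantics is
evaluation of the polynomial `∂_{x_p}(π F₁, π F₂)`. -/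
theorem stmt17 {n : ℕ} (p : Fin n) (F₁ F₂ D : Fm (Fin n))
    (hD : ∀ v : Fin n → Bool,
      bval (D.eval v) =
        MvPolynomial.eval (fun i => bval (v i)) (indRule p F₁.proj F₂.proj)) :
    ∀ v : Fin n → Bool,
      D.eval v = true ↔
        ∃ vh : Fin n → Bool, (∀ q : Fin n, q ≠ p → vh q = v q) ∧
          F₁.eval vh = true ∧ F₂.eval vh = true := by
  intro v
  rw [bval_injective ((hD v).trans (eval_indRule_proj v p F₁ F₂)), exists_eq_off_and_iff,
    Bool.exists_bool]
  simp only [Bool.or_eq_true, Bool.and_eq_true]
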